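/- (Kegel) Let A and B be subgroups of a finite group G such that G ≠ AB and A permutes with B^x for all x ∈ G. Then G has a proper normal subgroup N such that either A ≤ N or B ≤ N. -/

import Mathlib

open Subgroup Pointwise

variable {G : Type*}

/-- The conjugate subgroup `K ^ x = x⁻¹ K x`. -/
def sconj [Group G] (x : G) (K : Subgroup G) : Subgroup G :=
  K.map (MulAut.conj x⁻¹).toMonoidHom

/-- Two subgroups permute if `AB = BA` as subsets. -/
def permutes [Group G] (A B : Subgroup G) : Prop :=
  (A : Set G) * (B : Set G) = (B : Set G) * (A : Set G)

/-- `H/K` is a chief factor of `G`. -/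
def IsChiefFactor [Group G] (K H : Subgroup G) : Prop :=
  K.Normal ∧ H.Normal ∧ K < H ∧ ∀ N : Subgroup G, N.Normal → K < N → N ≤ H → N = H

/-- The factor `H/K` is cyclic (generated by a single coset). -/
def CyclicFactor [Group G] (K H : Subgroup G) : Prop :=
  ∃ g ∈ H, ∀ h ∈ H, ∃ n : ℤ, (g ^ n)⁻¹ * h ∈ K

/-- A group is `p`-soluble if every chief factor is a `p`-group or a `p'`-group. -/
def pSoluble (p : ℕ) (X : Type*) [Group X] : Prop :=
  ∀ K H : Subgroup X, IsChiefFactor K H →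
    (∃ n : ℕ, (K.subgroupOf H).index = p ^ n) ∨ ¬ p ∣ (K.subgroupOf H).index

/-- `p`-supersoluble: `p`-soluble and chief factors of order divisible by `p` have order `p`. -/
def pSupersoluble (p : ℕ) (X : Type*) [Group X] : Prop :=
  pSoluble p X ∧ ∀ K H : Subgroup X, IsChiefFactor K H →
    p ∣ (K.subgroupOf H).index → (K.subgroupOf H).index = p

/-- A Hall `s`-subgroup: its order involves only primes in `s`, its index none. -/
def IsHallSigmaSubgroup {X : Type*} [Group X] (s : Set ℕ) (H : Subgroup X) : Prop :=
  (∀ q : ℕ, q.Prime → q ∣ Nat.card H → q ∈ s) ∧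
    ∀ q : ℕ, q.Prime → q ∣ H.index → q ∉ s

/-- `σ` is a partition of the set of all primes. -/
def IsPrimePartition {ι : Type*} (σ : ι → Set ℕ) : Prop :=
  (∀ i, ∀ q ∈ σ i, Nat.Prime q) ∧ ∀ q : ℕ, q.Prime → ∃! i, q ∈ σ i

/-- `ℋ` (with labelling `j`) is a complete Hall `σ`-set. -/
def IsCompleteHallSigmaSet {X : Type*} [Group X] {ι : Type*} (σ : ι → Set ℕ)
    {t : ℕ} (ℋ : Fin t → Subgroup X) (j : Fin t → ι) : Prop :=
  Function.Injective j ∧ (∀ i, IsHallSigmaSubgroup (σ (j i)) (ℋ i)) ∧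
    ∀ a : ι, (∃ q : ℕ, q.Prime ∧ q ∈ σ a ∧ q ∣ Nat.card X) → ∃ i, j i = a

/-- `H` is σ-semipermutable with respect to `ℋ`. -/
def SigmaSemipermutable {X : Type*} [Group X] {t : ℕ} (H : Subgroup X)
    (ℋ : Fin t → Subgroup X) : Prop :=
  ∀ i : Fin t, Nat.Coprime (Nat.card H) (Nat.card (ℋ i)) →
    ∀ x : X, permutes H (sconj x (ℋ i))

/-- `E/O ≤ Z_∞(G/O)`: there is an ascending chain from `O` which is central over `O`
and covers `E`. -/
def LeHypercenterOver [Group G] (O E : Subgroup G) : Prop :=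
  ∃ n : ℕ, ∃ Z : ℕ → Subgroup G, Z 0 = O ∧ E ≤ Z n ∧
    ∀ i < n, Z i ≤ Z (i + 1) ∧ ∀ z ∈ Z (i + 1), ∀ g : G, z * g * z⁻¹ * g⁻¹ ∈ Z i

/-- `p`-nilpotent: has a normal `p`-complement. -/
def pNilpotent (p : ℕ) (X : Type*) [Group X] : Prop :=
  ∃ N : Subgroup X, N.Normal ∧ ¬ p ∣ Nat.card N ∧
    ∀ q : ℕ, q.Prime → q ∣ N.index → q = p

/-- `O_{p'}(E)`, the largest normal `p'`-subgroup of `E`, as a subgroup of `G`. -/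
def OpPrime (p : ℕ) [Group G] (E : Subgroup G) : Subgroup G :=
  ⨆ N ∈ {N : Subgroup G | N ≤ E ∧ (N.subgroupOf E).Normal ∧ ¬ p ∣ Nat.card N}, N

/-- `O_π(X)`, the largest normal `π`-subgroup. -/
def Oset (π : Set ℕ) (X : Type*) [Group X] : Subgroup X :=
  ⨆ N ∈ {N : Subgroup X | N.Normal ∧ ∀ q : ℕ, q.Prime → q ∣ Nat.card N → q ∈ π}, N

/-- The Fitting subgroup: join of all normal nilpotent subgroups. -/
def FittingSub (X : Type*) [Group X] : Subgroup X :=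
  ⨆ N ∈ {N : Subgroup X | N.Normal ∧ Group.IsNilpotent N}, N

/-- `G/C` is strictly `p`-closed (stated internally in `G`, over the subgroup `C`). -/
def StrictlyPClosedOver [Group G] (p : ℕ) (C : Subgroup G) : Prop :=
  ∃ S : Subgroup G, C ≤ S ∧ S.Normal ∧ (∀ s ∈ S, ∃ n : ℕ, s ^ p ^ n ∈ C) ∧
    ¬ p ∣ S.index ∧ (∀ a b : G, a * b * a⁻¹ * b⁻¹ ∈ S) ∧ ∀ a : G, a ^ (p - 1) ∈ S

/-!
Induct downwards on `|B|`. For a conjugate `A^u` of `A`, let `B^{A^u}` be the subgroup generated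
by the `A^u`-conjugates of `B`. The pair `(A^u, B^{A^u})` again satisfies the hypotheses, since
its product lies in the proper subgroup `A^u B`, and a normal subgroup containing `A^u` or
`B^{A^u}` contains `A` or `B`. So by induction `B^{A^u} = B`, i.e. every conjugate of `A`
normalizes `B`. Unless the normal closure of `A` is proper, this forces `B` to be normal.
-/

section Conjugation

variable [Group G]

theorem mem_sconj {K : Subgroup G} {u x : G} : x ∈ sconj u K ↔ u * x * u⁻¹ ∈ K := by
  rw [sconj, Subgroup.mem_map_equiv, MulAut.conj_symm_apply, inv_inv]

theorem sconj_one (K : Subgroup G) : sconj 1 K = K := by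
  ext; simp [mem_sconj]

theorem sconj_mul (x y : G) (K : Subgroup G) : sconj (x * y) K = sconj y (sconj x K) := by
  ext; simp only [mem_sconj, mul_inv_rev, mul_assoc]

theorem sconj_inv_sconj (u : G) (K : Subgroup G) : sconj u⁻¹ (sconj u K) = K := by
  rw [← sconj_mul, mul_inv_cancel, sconj_one]

theorem card_sconj (u : G) (K : Subgroup G) : Nat.card (sconj u K) = Nat.card K :=
  (Nat.card_congr (MulEquiv.subgroupMap (MulAut.conj u⁻¹) K).toEquiv).symm

theorem sconj_iSup {ι : Sort*} (u : G) (K : ι → Subgroup G) :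
    sconj u (⨆ i, K i) = ⨆ i, sconj u (K i) :=
  Subgroup.map_iSup _ _

theorem sconj_le_of_mem {K H : Subgroup G} {u : G} (hK : K ≤ H) (hu : u ∈ H) :
    sconj u K ≤ H := fun x hx => by
  simpa [mul_assoc] using H.mul_mem (H.mul_mem (H.inv_mem hu) (hK (mem_sconj.mp hx))) hu

theorem Subgroup.Normal.le_of_sconj_le {N K : Subgroup G} (hN : N.Normal) {u : G}
    (h : sconj u K ≤ N) : K ≤ N := fun x hx => by
  have : u⁻¹ * x * u ∈ sconj u K := mem_sconj.mpr (by simpa [mul_assoc] using hx)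
  simpa [mul_assoc] using hN.conj_mem _ (h this) u

theorem mem_normalizer_of_sconj_le [Finite G] {K : Subgroup G} {u : G} (h : sconj u K ≤ K) :
    u ∈ normalizer (K : Set G) := by
  have heq := Subgroup.eq_of_le_of_card_ge h (card_sconj u K).ge
  rw [Subgroup.mem_normalizer_iff]
  intro x
  rw [← mem_sconj, heq]

theorem normalClosure_le_of_forall_sconj_le {K H : Subgroup G} (h : ∀ u, sconj u K ≤ H) :
    normalClosure (K : Set G) ≤ H := by
  refine (Subgroup.closure_le _).mpr fun x hx => ?_
  obtain ⟨k, hk, hkx⟩ := Group.mem_conjugatesOfSet_iff.mp hx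
  obtain ⟨c, rfl⟩ := isConj_iff.mp hkx
  exact h c⁻¹ (mem_sconj.mpr (by simpa [mul_assoc] using hk))

end Conjugation

section Permutability

variable [Group G] {H K : Subgroup G}

theorem permutes_of_mul_subset (h : (K : Set G) * H ⊆ H * K) : permutes H K := by
  refine h.antisymm' ?_
  simpa only [mul_inv_rev, inv_coe_set] using Set.inv_subset_inv.mpr h

theorem permutes.map {G' : Type*} [Group G'] (f : G →* G') (h : permutes H K) :
    permutes (H.map f) (K.map f) := by
  simp only [permutes, Subgroup.coe_map, ← Set.image_mul]
  rw [h]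

theorem permutes.sconj (u : G) (h : permutes H K) : permutes (sconj u H) (sconj u K) :=
  h.map _

theorem permutes_iSup {ι : Sort*} {L : ι → Subgroup G} (h : ∀ i, permutes H (L i)) :
    permutes H (⨆ i, L i) := by
  refine permutes_of_mul_subset ?_
  rintro _ ⟨x, hx, a, ha, rfl⟩
  induction hx using Subgroup.iSup_induction' generalizing a with
  | hp i x hx =>
    have : x * a ∈ (H : Set G) * L i := (h i).symm ▸ Set.mul_mem_mul hx ha
    exact Set.mul_subset_mul_left (le_iSup L i) this
  | h1 => exact ⟨a, ha, 1, one_mem _, by simp⟩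
  | hmul x y _ _ hx hy =>
    obtain ⟨a', ha', y', hy', hya⟩ := hy a ha
    obtain ⟨a'', ha'', x', hx', hxa⟩ := hx a' ha'
    refine ⟨a'', ha'', x' * y', mul_mem hx' hy', ?_⟩
    dsimp only at hya hxa ⊢
    rw [← mul_assoc, hxa, mul_assoc, hya, mul_assoc]

theorem permutes.coe_sup (h : permutes H K) : ((H ⊔ K : Subgroup G) : Set G) = H * K := by
  refine Set.Subset.antisymm ?_ ?_
  · rw [sup_eq_closure_mul]
    intro x hx
    induction hx using Subgroup.closure_induction with
    | mem _ hx => exact hx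
    | one => exact ⟨1, one_mem _, 1, one_mem _, mul_one 1⟩
    | mul x y _ _ hx hy =>
      have := Set.mul_mem_mul hx hy
      rwa [mul_assoc, ← mul_assoc (K : Set G), ← h, mul_assoc, ← mul_assoc, coe_mul_coe,
        coe_mul_coe] at this
    | inv x _ hx =>
      have := Set.inv_mem_inv.mpr hx
      rwa [mul_inv_rev, inv_coe_set, inv_coe_set, ← h] at this
  · exact Subgroup.mul_subset (le_sup_left (b := K)) (le_sup_right (a := H))

end Permutability

section Kegel

variable [Group G]

theorem sconj_mul_sconj_eq_univ {H K : Subgroup G} (h : (H : Set G) * (K : Set G) = Set.univ)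
    (a b : G) :
    (sconj a H : Set G) * (sconj b K : Set G) = Set.univ := by
  refine Set.eq_univ_of_forall fun t => ?_
  obtain ⟨x₁, hx₁, y₁, hy₁, h₁ : x₁ * y₁ = a * t * b⁻¹⟩ : a * t * b⁻¹ ∈ (H : Set G) * K :=
    h ▸ trivial
  obtain ⟨x₂, hx₂, y₂, hy₂, h₂ : x₂ * y₂ = a * b⁻¹⟩ : a * b⁻¹ ∈ (H : Set G) * K := h ▸ trivial
  refine ⟨a⁻¹ * (x₁ * x₂⁻¹) * a, mem_sconj.mpr ?_, b⁻¹ * (y₂⁻¹ * y₁) * b, mem_sconj.mpr ?_, ?_⟩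
  · simpa [mul_assoc] using mul_mem hx₁ (inv_mem hx₂)
  · simpa [mul_assoc] using mul_mem (inv_mem hy₂) hy₁
  · calc a⁻¹ * (x₁ * x₂⁻¹) * a * (b⁻¹ * (y₂⁻¹ * y₁) * b)
          = a⁻¹ * (x₁ * x₂⁻¹ * (a * b⁻¹) * (y₂⁻¹ * y₁)) * b := by group
      _ = a⁻¹ * (x₁ * y₁) * b := by rw [← h₂]; group
      _ = t := by rw [h₁]; group

theorem permutes_sconj_left {A B : Subgroup G} (h : ∀ x, permutes A (sconj x B)) (u x : G) :
    permutes (sconj u A) (sconj x B) := by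
  simpa only [← sconj_mul, inv_mul_cancel_right] using (h (x * u⁻¹)).sconj u

def sconjSup (S B : Subgroup G) : Subgroup G := ⨆ s : S, sconj s B

variable {S B : Subgroup G}

theorem le_sconjSup : B ≤ sconjSup S B := by
  simpa only [sconjSup, OneMemClass.coe_one, sconj_one] using
    le_iSup (fun s : S => sconj (s : G) B) 1

theorem sconjSup_le_sup : sconjSup S B ≤ S ⊔ B :=
  iSup_le fun s => sconj_le_of_mem le_sup_right (le_sup_left (b := B) s.2)

theorem permutes_sconj_sconjSup (h : ∀ x, permutes S (sconj x B)) (y : G) :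
    permutes S (sconj y (sconjSup S B)) := by
  rw [sconjSup, sconj_iSup]
  exact permutes_iSup fun s => by rw [← sconj_mul]; exact h _

theorem mul_sconjSup_ne_univ (hSB : permutes S B) (h : (S : Set G) * (B : Set G) ≠ Set.univ) :
    (S : Set G) * (sconjSup S B : Set G) ≠ Set.univ := fun hu =>
  h (hSB.coe_sup ▸ Set.eq_univ_of_univ_subset
    (hu ▸ Subgroup.mul_subset (le_sup_left (b := B)) sconjSup_le_sup))

theorem le_normalizer_of_sconjSup_le [Finite G] (h : sconjSup S B ≤ B) :
    S ≤ normalizer (B : Set G) := fun s hs =>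
  mem_normalizer_of_sconj_le ((le_iSup (fun s : S => sconj (s : G) B) ⟨s, hs⟩).trans h)

end Kegel

/-- Kegel: If `G ≠ AB` and `A` permutes with `B^x` for all `x`, then `G`
has a proper normal subgroup containing `A` or `B`. -/
theorem stmt2 [Group G] [Finite G] (A B : Subgroup G)
    (hG : (A : Set G) * (B : Set G) ≠ Set.univ)
    (h : ∀ x : G, permutes A (sconj x B)) :
    ∃ N : Subgroup G, N.Normal ∧ N ≠ ⊤ ∧ (A ≤ N ∨ B ≤ N) := by
  induction hn : Nat.card G - Nat.card B using Nat.strong_induction_on generalizing A B with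
  | _ n ih =>
    by_contra hC
    have hA : normalClosure (A : Set G) = ⊤ := by
      by_contra hne
      exact hC ⟨_, normalClosure_normal, hne, Or.inl subset_normalClosure⟩
    have hnorm : ∀ u, sconj u A ≤ normalizer (B : Set G) := by
      intro u
      have hprod : (sconj u A : Set G) * (B : Set G) ≠ Set.univ := fun hu =>
        hG (by simpa only [sconj_inv_sconj, sconj_one] using sconj_mul_sconj_eq_univ hu u⁻¹ 1)
      have hperm : permutes (sconj u A) B := by
        simpa only [sconj_one] using permutes_sconj_left h u 1
      have hcard : Nat.card (sconjSup (sconj u A) B) ≤ Nat.card B := by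
        by_contra! hlt
        have := (sconjSup (sconj u A) B).card_le_card_group
        obtain ⟨N, hN, hNtop, hle⟩ := ih _ (by omega) (sconj u A) _
          (mul_sconjSup_ne_univ hperm hprod) (permutes_sconj_sconjSup (permutes_sconj_left h u)) rfl
        exact hC ⟨N, hN, hNtop, hle.imp hN.le_of_sconj_le le_sconjSup.trans⟩
      exact le_normalizer_of_sconjSup_le (Subgroup.eq_of_le_of_card_ge le_sconjSup hcard).ge
    have hB : B.Normal := normalizer_eq_top_iff.mp
      (top_le_iff.mp (hA ▸ normalClosure_le_of_forall_sconj_le hnorm))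
    exact hC ⟨B, hB, fun hB => hG (by simp [hB]), Or.inr le_rfl⟩
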